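/- Let L be a G-graded field with graded subfields l and K, and let k be a graded subfield with k ⊆ l ∩ K. If l/k is algebraic (every homogeneous element of l is integral over k), the unit-grading parts agree (L_1 = K_1 as subfields, where 1 is the identity of G), and ρ(L^×)/ρ(K^×) is a torsion group, then the restriction map ψ_{L/l,K/k} : P_{L/l} → P_{K/k}, O ↦ O ∩ K, is bijective. -/

import Mathlib

universe u v

/-- A `G`-graded commutative ring structure on `A`: graded pieces `deg g`,
multiplicativity of the grading, and an internal direct sum decomposition
recorded by the homogeneous-component function `comp`. -/
structure GradedStr (G : Type u) [CommGroup G] (A : Type v) [CommRing A] where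
  deg : G → AddSubgroup A
  one_mem : (1 : A) ∈ deg 1
  mul_mem : ∀ {g h : G} {a b : A}, a ∈ deg g → b ∈ deg h → a * b ∈ deg (g * h)
  comp : A → G → A
  comp_mem : ∀ a g, comp a g ∈ deg g
  comp_add : ∀ a b g, comp (a + b) g = comp a g + comp b g
  comp_of_mem : ∀ {a : A} {g : G}, a ∈ deg g → comp a g = a
  comp_of_mem_ne : ∀ {a : A} {g g' : G}, a ∈ deg g → g' ≠ g → comp a g' = 0
  finite_support : ∀ a : A, (Function.support (comp a)).Finite
  sum_comp : ∀ a : A, ∑ᶠ g, comp a g = a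

namespace GradedStr

variable {G : Type u} [CommGroup G] {A : Type v} [CommRing A]

/-- `a` is homogeneous: it lies in some graded piece. -/
def IsHomog (𝒜 : GradedStr G A) (a : A) : Prop := ∃ g, a ∈ 𝒜.deg g

/-- A `G`-graded field: a nonzero graded ring in which every nonzero homogeneous
element is invertible. -/
def IsGradedField (𝒜 : GradedStr G A) : Prop :=
  Nontrivial A ∧ ∀ a : A, 𝒜.IsHomog a → a ≠ 0 → IsUnit a

/-- A graded subring: a subring stable under taking homogeneous components. -/
def IsGradedSubring (𝒜 : GradedStr G A) (S : Subring A) : Prop :=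
  ∀ x ∈ S, ∀ g, 𝒜.comp x g ∈ S

/-- A graded subfield of a graded field: a graded subring containing the inverses of
its nonzero homogeneous elements. -/
def IsGradedSubfield (𝒜 : GradedStr G A) (S : Subring A) : Prop :=
  𝒜.IsGradedSubring S ∧ ∀ x ∈ S, 𝒜.IsHomog x → x ≠ 0 → Ring.inverse x ∈ S

/-- The additive subgroup of homogeneous polynomials of grading `h` in `K[g₀⁻¹ T]`,
the polynomial ring in which `T` is declared homogeneous of grading `g₀`: the
coefficient of `T^n` must be homogeneous of grading `h * g₀⁻ⁿ`. -/
def polyDeg (𝒜 : GradedStr G A) (g₀ h : G) : AddSubgroup (Polynomial A) where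
  carrier := {p | ∀ n : ℕ, p.coeff n ∈ 𝒜.deg (h * (g₀ ^ n)⁻¹)}
  zero_mem' := by intro n; simpa using (𝒜.deg (h * (g₀ ^ n)⁻¹)).zero_mem
  add_mem' := by
    intro p q hp hq n
    rw [Polynomial.coeff_add]
    exact (𝒜.deg _).add_mem (hp n) (hq n)
  neg_mem' := by
    intro p hp n
    rw [Polynomial.coeff_neg]
    exact (𝒜.deg _).neg_mem (hp n)

/-- A homogeneous polynomial in `K[g₀⁻¹T]`. -/
def IsHomogPoly (𝒜 : GradedStr G A) (g₀ : G) (p : Polynomial A) : Prop :=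
  ∃ h, p ∈ 𝒜.polyDeg g₀ h

/-- The graded fraction field of a graded subring of a graded field, computed inside
the ambient graded field: the subring generated by `S` together with the inverses of
the nonzero homogeneous elements of `S`. -/
def fracIn (𝒜 : GradedStr G A) (S : Subring A) : Subring A :=
  Subring.closure (↑S ∪ {y : A | ∃ x ∈ S, x ≠ 0 ∧ 𝒜.IsHomog x ∧ y = Ring.inverse x})

end GradedStr

/-- `x` is integral over the subring `S` (satisfies a monic polynomial equation with
coefficients in `S`). -/
def IntegralOver {A : Type v} [CommRing A] (S : Subring A) (x : A) : Prop :=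
  ∃ p : Polynomial A, p.Monic ∧ (∀ n, p.coeff n ∈ S) ∧ Polynomial.eval x p = 0

/-- Algebraic independence of a family of elements over a subring: the evaluation map
from the (multivariate) polynomial ring is injective.  (For homogeneous elements this
is graded algebraic independence, the grading playing no role in injectivity.) -/
def AlgIndepOver {A : Type v} [CommRing A] {ι : Type*} (S : Subring A) (T : ι → A) : Prop :=
  Function.Injective (MvPolynomial.eval₂Hom S.subtype T)

/-- A graded valuation ring of the graded subfield `F` of the ambient graded field:
a graded subring `O ⊆ F` such that every nonzero homogeneous element `f` of `F`
satisfies `f ∈ O` or `f⁻¹ ∈ O`. -/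
def IsGVRofSubfield {G : Type u} [CommGroup G] {A : Type v} [CommRing A]
    (𝒜 : GradedStr G A) (F : Subring A) (O : Subring A) : Prop :=
  O ≤ F ∧ 𝒜.IsGradedSubring O ∧
    ∀ f ∈ F, f ≠ 0 → 𝒜.IsHomog f → f ∈ O ∨ Ring.inverse f ∈ O

/-!
Given a graded valuation ring `O'` of `K` containing `k`, its extension to `L` is the graded
subring whose homogeneous elements are those having a positive power in `O'`. Since
`ρ(L^×)/ρ(K^×)` is torsion and `L₁ ⊆ K`, every homogeneous element of `L` has a positive power
in `K`; this gives the valuation property, and it forces uniqueness because a graded valuation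
ring contains every homogeneous element that has a positive power in it. Two homogeneous
elements of the same grading differ by a factor in `L₁ ⊆ K`, which makes the set closed under
addition. Finally `l` lies in the extension because `l/k` is algebraic and valuation rings are
integrally closed.
-/

namespace GradedStr

variable {G : Type u} [CommGroup G] {L : Type v} [CommRing L] (𝒜 : GradedStr G L)

def compHom (g : G) : L →+ L :=
  AddMonoidHom.mk' (𝒜.comp · g) (𝒜.comp_add · · g)

theorem comp_zero (g : G) : 𝒜.comp 0 g = 0 :=
  map_zero (𝒜.compHom g)

theorem comp_neg (a : L) (g : G) : 𝒜.comp (-a) g = -𝒜.comp a g :=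
  map_neg (𝒜.compHom g) a

theorem comp_sum {ι : Type*} (s : Finset ι) (f : ι → L) (g : G) :
    𝒜.comp (∑ i ∈ s, f i) g = ∑ i ∈ s, 𝒜.comp (f i) g :=
  map_sum (𝒜.compHom g) f s

theorem sum_support_comp (a : L) :
    ∑ g ∈ (𝒜.finite_support a).toFinset, 𝒜.comp a g = a :=
  (finsum_eq_sum _ (𝒜.finite_support a)).symm.trans (𝒜.sum_comp a)

theorem mem_of_forall_comp_mem {S : Type*} [SetLike S L] [AddSubmonoidClass S L] {s : S}
    {a : L} (h : ∀ g, 𝒜.comp a g ∈ s) : a ∈ s := by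
  rw [← 𝒜.sum_support_comp a]
  exact sum_mem fun g _ => h g

theorem comp_mem_of_mem_deg {s : Set L} (h0 : (0 : L) ∈ s) {f : L} {g : G}
    (hf : f ∈ 𝒜.deg g) (hfs : f ∈ s) (g' : G) : 𝒜.comp f g' ∈ s := by
  by_cases h : g' = g
  · rwa [h, 𝒜.comp_of_mem hf]
  · rwa [𝒜.comp_of_mem_ne hf h]

theorem IsGradedSubring.inf {S T : Subring L} (hS : 𝒜.IsGradedSubring S)
    (hT : 𝒜.IsGradedSubring T) : 𝒜.IsGradedSubring (S ⊓ T) := fun x hx g =>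
  Subring.mem_inf.2 ⟨hS x (Subring.mem_inf.1 hx).1 g, hT x (Subring.mem_inf.1 hx).2 g⟩

theorem IsGradedSubring.eq_of_homog_mem_iff {S T : Subring L} (hS : 𝒜.IsGradedSubring S)
    (hT : 𝒜.IsGradedSubring T) (h : ∀ f g, f ∈ 𝒜.deg g → (f ∈ S ↔ f ∈ T)) : S = T := by
  ext a
  exact ⟨fun ha => 𝒜.mem_of_forall_comp_mem fun g => (h _ g (𝒜.comp_mem a g)).1 (hS a ha g),
    fun ha => 𝒜.mem_of_forall_comp_mem fun g => (h _ g (𝒜.comp_mem a g)).2 (hT a ha g)⟩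

theorem comp_mul_of_mem {f : L} {h : G} (hf : f ∈ 𝒜.deg h) (b : L) (g : G) :
    𝒜.comp (f * b) (h * g) = f * 𝒜.comp b g := by
  classical
  conv_lhs => rw [← 𝒜.sum_support_comp b, Finset.mul_sum, comp_sum]
  rw [Finset.sum_eq_single g]
  · exact 𝒜.comp_of_mem (𝒜.mul_mem hf (𝒜.comp_mem b g))
  · intro g' _ hg'
    exact 𝒜.comp_of_mem_ne (𝒜.mul_mem hf (𝒜.comp_mem b g'))
      fun e => hg' (mul_left_cancel e).symm
  · intro hg
    rw [(𝒜.finite_support b).mem_toFinset, Function.mem_support, not_not] at hg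
    rw [hg, mul_zero, comp_zero]

theorem comp_mul (a b : L) (g : G) :
    𝒜.comp (a * b) g =
      ∑ h ∈ (𝒜.finite_support a).toFinset, 𝒜.comp a h * 𝒜.comp b (h⁻¹ * g) := by
  conv_lhs => rw [← 𝒜.sum_support_comp a, Finset.sum_mul, comp_sum]
  refine Finset.sum_congr rfl fun h _ => ?_
  simpa using 𝒜.comp_mul_of_mem (𝒜.comp_mem a h) b (h⁻¹ * g)

theorem pow_mem_deg {f : L} {g : G} (hf : f ∈ 𝒜.deg g) (n : ℕ) : f ^ n ∈ 𝒜.deg (g ^ n) := by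
  induction n with
  | zero => simpa using 𝒜.one_mem
  | succ n ih => rw [pow_succ, pow_succ]; exact 𝒜.mul_mem ih hf

theorem inverse_mem_deg (hL : 𝒜.IsGradedField) {f : L} {g : G} (hf : f ∈ 𝒜.deg g) :
    Ring.inverse f ∈ 𝒜.deg g⁻¹ := by
  by_cases h0 : f = 0
  · rw [h0, Ring.inverse_zero]
    exact zero_mem _
  have hu := hL.2 f ⟨g, hf⟩ h0
  suffices h : ∀ h ≠ g⁻¹, 𝒜.comp (Ring.inverse f) h = 0 by
    rw [← 𝒜.sum_comp (Ring.inverse f), finsum_eq_single _ g⁻¹ h]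
    exact 𝒜.comp_mem _ _
  intro h hh
  have key : f * 𝒜.comp (Ring.inverse f) h = 0 := by
    rw [← 𝒜.comp_mul_of_mem hf, Ring.mul_inverse_cancel f hu]
    exact 𝒜.comp_of_mem_ne 𝒜.one_mem fun e => hh (eq_inv_of_mul_eq_one_right e)
  exact hu.mul_right_eq_zero.mp key

theorem mul_inverse_mem_deg_one (hL : 𝒜.IsGradedField) {x y : L} {g : G}
    (hx : x ∈ 𝒜.deg g) (hy : y ∈ 𝒜.deg g) : x * Ring.inverse y ∈ 𝒜.deg 1 := by
  simpa using 𝒜.mul_mem hx (𝒜.inverse_mem_deg hL hy)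

def subringOfHomog (Q : Set L) (h0 : (0 : L) ∈ Q) (h1 : (1 : L) ∈ Q)
    (hmul : ∀ x ∈ Q, ∀ y ∈ Q, x * y ∈ Q) (hneg : ∀ x ∈ Q, -x ∈ Q)
    (hadd : ∀ g, ∀ x ∈ 𝒜.deg g, ∀ y ∈ 𝒜.deg g, x ∈ Q → y ∈ Q → x + y ∈ Q) : Subring L where
  carrier := {a | ∀ g, 𝒜.comp a g ∈ Q}
  zero_mem' g := by rw [comp_zero]; exact h0
  one_mem' := 𝒜.comp_mem_of_mem_deg h0 𝒜.one_mem h1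
  add_mem' {a b} ha hb g := by
    rw [𝒜.comp_add]
    exact hadd g _ (𝒜.comp_mem a g) _ (𝒜.comp_mem b g) (ha g) (hb g)
  neg_mem' {a} ha g := by rw [comp_neg]; exact hneg _ (ha g)
  mul_mem' {a b} ha hb g := by
    rw [comp_mul]
    refine (Finset.sum_induction _ (fun x => x ∈ 𝒜.deg g ∧ x ∈ Q)
      (fun x y hx hy => ⟨add_mem hx.1 hy.1, hadd g x hx.1 y hy.1 hx.2 hy.2⟩)
      ⟨zero_mem _, h0⟩ fun h _ => ⟨?_, hmul _ (ha h) _ (hb _)⟩).2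
    simpa using 𝒜.mul_mem (𝒜.comp_mem a h) (𝒜.comp_mem b (h⁻¹ * g))

section subringOfHomog

variable {𝒜} {Q : Set L} {h0 : (0 : L) ∈ Q} {h1 : (1 : L) ∈ Q}
  {hmul : ∀ x ∈ Q, ∀ y ∈ Q, x * y ∈ Q} {hneg : ∀ x ∈ Q, -x ∈ Q}
  {hadd : ∀ g, ∀ x ∈ 𝒜.deg g, ∀ y ∈ 𝒜.deg g, x ∈ Q → y ∈ Q → x + y ∈ Q}

theorem mem_subringOfHomog {a : L} :
    a ∈ 𝒜.subringOfHomog Q h0 h1 hmul hneg hadd ↔ ∀ g, 𝒜.comp a g ∈ Q :=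
  Iff.rfl

theorem mem_subringOfHomog_of_mem_deg {f : L} {g : G} (hf : f ∈ 𝒜.deg g) :
    f ∈ 𝒜.subringOfHomog Q h0 h1 hmul hneg hadd ↔ f ∈ Q :=
  ⟨fun h => by simpa only [𝒜.comp_of_mem hf] using mem_subringOfHomog.1 h g,
    𝒜.comp_mem_of_mem_deg h0 hf⟩

theorem isGradedSubring_subringOfHomog :
    𝒜.IsGradedSubring (𝒜.subringOfHomog Q h0 h1 hmul hneg hadd) := fun x hx g =>
  (mem_subringOfHomog_of_mem_deg (𝒜.comp_mem x g)).2 (mem_subringOfHomog.1 hx g)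

end subringOfHomog

end GradedStr

section powRootSet

variable {R : Type*} [CommRing R]

def powRootSet (S : Subring R) : Set R := {x | ∃ m, 0 < m ∧ x ^ m ∈ S}

variable {S : Subring R} {x y : R}

theorem subset_powRootSet (hx : x ∈ S) : x ∈ powRootSet S :=
  ⟨1, one_pos, by rwa [pow_one]⟩

theorem mul_mem_powRootSet (hx : x ∈ powRootSet S) (hy : y ∈ powRootSet S) :
    x * y ∈ powRootSet S := by
  obtain ⟨m, hm, hxm⟩ := hx
  obtain ⟨n, hn, hyn⟩ := hy
  refine ⟨m * n, Nat.mul_pos hm hn, ?_⟩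
  rw [mul_pow, pow_mul, pow_mul']
  exact S.mul_mem (S.pow_mem hxm n) (S.pow_mem hyn m)

theorem neg_mem_powRootSet (hx : x ∈ powRootSet S) : -x ∈ powRootSet S := by
  obtain ⟨m, hm, hxm⟩ := hx
  refine ⟨2 * m, by omega, ?_⟩
  rw [Even.neg_pow (even_two_mul m), pow_mul']
  exact S.pow_mem hxm 2

theorem add_mem_powRootSet_of_mul_inverse_mem (hy : IsUnit y) (hyS : y ∈ powRootSet S)
    (h : x * Ring.inverse y ∈ S) : x + y ∈ powRootSet S := by
  have hxy : x + y = y * (1 + x * Ring.inverse y) := by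
    rw [mul_add, mul_one, mul_left_comm, Ring.mul_inverse_cancel y hy, mul_one, add_comm]
  rw [hxy]
  exact mul_mem_powRootSet hyS (subset_powRootSet (S.add_mem S.one_mem h))

end powRootSet

section IntegralOver

variable {R : Type*} [CommRing R]

theorem integralOver_iff_isIntegral {S : Subring R} {x : R} :
    IntegralOver S x ↔ IsIntegral S x := by
  constructor
  · rintro ⟨p, hpm, hpS, hpx⟩
    have hsub : (p.coeffs : Set R) ⊆ S := fun c hc => by
      obtain ⟨n, -, rfl⟩ := Polynomial.mem_coeffs_iff.mp hc
      exact hpS n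
    refine ⟨p.toSubring S hsub, (Polynomial.monic_toSubring _ _ _).mpr hpm, ?_⟩
    rw [Polynomial.eval₂_eq_eval_map]
    exact (Polynomial.map_toSubring p S hsub).symm ▸ hpx
  · rintro ⟨q, hqm, hqx⟩
    refine ⟨q.map S.subtype, hqm.map _, fun n => ?_, ?_⟩
    · rw [Polynomial.coeff_map]
      exact (q.coeff n).2
    · rwa [Polynomial.eval_map]

theorem IntegralOver.pow {S : Subring R} {x : R} (hx : IntegralOver S x) (m : ℕ) :
    IntegralOver S (x ^ m) :=
  integralOver_iff_isIntegral.2 ((integralOver_iff_isIntegral.1 hx).pow m)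

theorem Subring.mem_of_pow_mem_of_inverse_mem {S : Subring R} {z : R} (hz : IsUnit z) {m : ℕ}
    (hm : 0 < m) (hzm : z ^ m ∈ S) (hinv : Ring.inverse z ∈ S) : z ∈ S := by
  obtain ⟨n, rfl⟩ : ∃ n, m = n + 1 := ⟨m - 1, by omega⟩
  have hz_eq : z = z ^ (n + 1) * Ring.inverse z ^ n := by
    rw [pow_succ', mul_assoc, ← mul_pow, Ring.mul_inverse_cancel z hz, one_pow, mul_one]
  rw [hz_eq]
  exact S.mul_mem hzm (S.pow_mem hinv n)

theorem Subring.mem_of_integralOver_of_inverse_mem {k S : Subring R} (hkS : k ≤ S) {y : R}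
    (hy : IsUnit y) (hint : IntegralOver k y) (hinv : Ring.inverse y ∈ S) : y ∈ S := by
  nontriviality R
  obtain ⟨p, hpm, hpk, hpy⟩ := hint
  obtain ⟨n, hn⟩ : ∃ n, p.natDegree = n + 1 := Nat.exists_eq_succ_of_ne_zero fun h => by
    rw [hpm.natDegree_eq_zero.mp h, Polynomial.eval_one] at hpy
    exact one_ne_zero hpy
  set w := Ring.inverse y
  have hyw : ∀ i ≤ n, y ^ i * w ^ n = w ^ (n - i) := fun i hi => by
    obtain ⟨j, rfl⟩ := Nat.exists_eq_add_of_le hi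
    rw [Nat.add_sub_cancel_left, pow_add, ← mul_assoc, ← mul_pow,
      Ring.mul_inverse_cancel y hy, one_pow, one_mul]
  have hlead : p.coeff (n + 1) = 1 := hn ▸ hpm.coeff_natDegree
  -- multiplying `p(y) = 0` by `y⁻ⁿ` exhibits `y` as a polynomial in `y⁻¹` over `k`
  have hsum : ∑ i ∈ Finset.range (n + 1), p.coeff i * w ^ (n - i) + y = 0 :=
    calc ∑ i ∈ Finset.range (n + 1), p.coeff i * w ^ (n - i) + y
        = (∑ i ∈ Finset.range (n + 1), p.coeff i * y ^ i + p.coeff (n + 1) * y ^ (n + 1))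
            * w ^ n := by
          rw [hlead, one_mul, add_mul, Finset.sum_mul, pow_succ', mul_assoc,
            hyw n le_rfl, Nat.sub_self, pow_zero, mul_one]
          refine congrArg (· + y) (Finset.sum_congr rfl fun i hi => ?_)
          rw [mul_assoc, hyw i (Finset.mem_range_succ_iff.mp hi)]
      _ = Polynomial.eval y p * w ^ n := by
          rw [Polynomial.eval_eq_sum_range, hn, Finset.sum_range_succ _ (n + 1)]
      _ = 0 := by rw [hpy, zero_mul]
  rw [eq_neg_of_add_eq_zero_right hsum]
  exact S.neg_mem (sum_mem fun i _ => S.mul_mem (hkS (hpk i)) (S.pow_mem hinv _))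

end IntegralOver

namespace IsGVRofSubfield

open GradedStr

variable {G : Type u} [CommGroup G] {L : Type v} [CommRing L] {𝒜 : GradedStr G L}

theorem inf_of_le {F O K : Subring L} (hO : IsGVRofSubfield 𝒜 F O)
    (hK : 𝒜.IsGradedSubfield K) (hKF : K ≤ F) : IsGVRofSubfield 𝒜 K (O ⊓ K) :=
  ⟨inf_le_right, hO.2.1.inf 𝒜 hK.1, fun f hf h0 hfh =>
    (hO.2.2 f (hKF hf) h0 hfh).imp (fun h => Subring.mem_inf.2 ⟨h, hf⟩)
      (fun h => Subring.mem_inf.2 ⟨h, hK.2 f hf hfh h0⟩)⟩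

variable (hL : 𝒜.IsGradedField)
include hL

theorem mem_of_pow_mem {F O : Subring L} (hO : IsGVRofSubfield 𝒜 F O) {f : L} (hfF : f ∈ F)
    (hf : 𝒜.IsHomog f) {m : ℕ} (hm : 0 < m) (hfm : f ^ m ∈ O) : f ∈ O := by
  by_cases h0 : f = 0
  · rw [h0]
    exact O.zero_mem
  exact (hO.2.2 f hfF h0 hf).elim id
    (Subring.mem_of_pow_mem_of_inverse_mem (hL.2 f hf h0) hm hfm)

variable {K O' : Subring L} (hO' : IsGVRofSubfield 𝒜 K O')
  (hone : ∀ x : L, x ∈ 𝒜.deg 1 → x ∈ K)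
include hO'

theorem mem_powRootSet_iff {f : L} (hfK : f ∈ K) (hf : 𝒜.IsHomog f) :
    f ∈ powRootSet O' ↔ f ∈ O' :=
  ⟨fun ⟨_, hm, hfm⟩ => hO'.mem_of_pow_mem hL hfK hf hm hfm, subset_powRootSet⟩

include hone in
theorem add_mem_powRootSet {g : G} {x y : L} (hx : x ∈ 𝒜.deg g) (hy : y ∈ 𝒜.deg g)
    (hxO : x ∈ powRootSet O') (hyO : y ∈ powRootSet O') : x + y ∈ powRootSet O' := by
  have := hL.1
  by_cases hx0 : x = 0
  · rwa [hx0, zero_add]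
  by_cases hy0 : y = 0
  · rwa [hy0, add_zero]
  have hxu := hL.2 x ⟨g, hx⟩ hx0
  have hyu := hL.2 y ⟨g, hy⟩ hy0
  -- `x * y⁻¹` has grading `1`, so it lies in `K`, and `O'` contains it or its inverse
  have ht1 := 𝒜.mul_inverse_mem_deg_one hL hx hy
  rcases hO'.2.2 _ (hone _ ht1) (hxu.mul hyu.ringInverse).ne_zero ⟨1, ht1⟩ with h | h
  · exact add_mem_powRootSet_of_mul_inverse_mem hyu hyO h
  · rw [Ring.inverse_mul (Or.inl hxu), Ring.inverse_inverse hyu] at h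
    rw [add_comm]
    exact add_mem_powRootSet_of_mul_inverse_mem hxu hxO h

def extend : Subring L :=
  𝒜.subringOfHomog (powRootSet O') (subset_powRootSet O'.zero_mem)
    (subset_powRootSet O'.one_mem) (fun _ hx _ hy => mul_mem_powRootSet hx hy)
    (fun _ hx => neg_mem_powRootSet hx) (fun _ _ hx _ hy => hO'.add_mem_powRootSet hL hone hx hy)

theorem mem_extend_of_mem_deg {f : L} {g : G} (hf : f ∈ 𝒜.deg g) :
    f ∈ hO'.extend hL hone ↔ f ∈ powRootSet O' :=
  mem_subringOfHomog_of_mem_deg hf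

theorem isGradedSubring_extend : 𝒜.IsGradedSubring (hO'.extend hL hone) :=
  isGradedSubring_subringOfHomog

theorem extend_inf (hK : 𝒜.IsGradedSubring K) : hO'.extend hL hone ⊓ K = O' := by
  refine ((hO'.isGradedSubring_extend hL hone).inf 𝒜 hK).eq_of_homog_mem_iff 𝒜 hO'.2.1
    fun f g hf => ?_
  rw [Subring.mem_inf, hO'.mem_extend_of_mem_deg hL hone hf]
  exact ⟨fun h => (hO'.mem_powRootSet_iff hL h.2 ⟨g, hf⟩).1 h.1,
    fun h => ⟨subset_powRootSet h, hO'.1 h⟩⟩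

variable (hpow : ∀ f : L, 𝒜.IsHomog f → ∃ m, 0 < m ∧ f ^ m ∈ K)
include hpow

theorem isGVRofSubfield_extend : IsGVRofSubfield 𝒜 ⊤ (hO'.extend hL hone) := by
  refine ⟨le_top, hO'.isGradedSubring_extend hL hone, fun f _ h0 ⟨g, hf⟩ => ?_⟩
  have := hL.1
  obtain ⟨m, hm, hfm⟩ := hpow f ⟨g, hf⟩
  rw [hO'.mem_extend_of_mem_deg hL hone hf,
    hO'.mem_extend_of_mem_deg hL hone (𝒜.inverse_mem_deg hL hf)]
  refine (hO'.2.2 _ hfm ((hL.2 f ⟨g, hf⟩ h0).pow m).ne_zero ⟨g ^ m, 𝒜.pow_mem_deg hf m⟩).imp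
    (fun h => ⟨m, hm, h⟩) (fun h => ⟨m, hm, ?_⟩)
  rwa [Ring.inverse_pow]

theorem le_extend {k l : Subring L} (hkO' : k ≤ O') (hl : 𝒜.IsGradedSubring l)
    (halg : ∀ x ∈ l, 𝒜.IsHomog x → IntegralOver k x) : l ≤ hO'.extend hL hone := by
  have := hL.1
  intro x hx
  refine mem_subringOfHomog.2 fun g => ?_
  have hz := 𝒜.comp_mem x g
  by_cases h0 : 𝒜.comp x g = 0
  · rw [h0]
    exact subset_powRootSet O'.zero_mem
  obtain ⟨m, hm, hzm⟩ := hpow _ ⟨g, hz⟩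
  have hu := (hL.2 _ ⟨g, hz⟩ h0).pow m
  refine ⟨m, hm, (hO'.2.2 _ hzm hu.ne_zero ⟨_, 𝒜.pow_mem_deg hz m⟩).elim id ?_⟩
  exact Subring.mem_of_integralOver_of_inverse_mem hkO' hu ((halg _ (hl x hx g) ⟨g, hz⟩).pow m)

theorem eq_extend {O : Subring L} (hO : IsGVRofSubfield 𝒜 ⊤ O) (hOK : O ⊓ K = O') :
    O = hO'.extend hL hone := by
  refine hO.2.1.eq_of_homog_mem_iff 𝒜 (hO'.isGradedSubring_extend hL hone) fun f g hf => ?_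
  rw [hO'.mem_extend_of_mem_deg hL hone hf]
  constructor
  · intro h
    obtain ⟨m, hm, hfm⟩ := hpow f ⟨g, hf⟩
    exact ⟨m, hm, hOK ▸ Subring.mem_inf.2 ⟨O.pow_mem h m, hfm⟩⟩
  · rintro ⟨m, hm, hfm⟩
    rw [← hOK] at hfm
    exact hO.mem_of_pow_mem hL trivial ⟨g, hf⟩ hm (Subring.mem_inf.1 hfm).1

end IsGVRofSubfield

theorem GradedStr.exists_pow_mem_of_torsion {G : Type u} [CommGroup G] {L : Type v}
    [CommRing L] (𝒜 : GradedStr G L) (hL : 𝒜.IsGradedField) {K : Subring L}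
    (hone : ∀ x : L, x ∈ 𝒜.deg 1 → x ∈ K)
    (htor : ∀ g : G, (∃ x : L, x ≠ 0 ∧ x ∈ 𝒜.deg g) →
      ∃ m : ℕ, 0 < m ∧ ∃ y ∈ K, y ≠ 0 ∧ y ∈ 𝒜.deg (g ^ m)) :
    ∀ f : L, 𝒜.IsHomog f → ∃ m, 0 < m ∧ f ^ m ∈ K := by
  rintro f ⟨g, hf⟩
  by_cases h0 : f = 0
  · exact ⟨1, one_pos, by rw [h0, pow_one]; exact K.zero_mem⟩
  obtain ⟨m, hm, y, hyK, hy0, hy⟩ := htor g ⟨f, h0, hf⟩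
  refine ⟨m, hm, ?_⟩
  have hq := hone _ (𝒜.mul_inverse_mem_deg_one hL (𝒜.pow_mem_deg hf m) hy)
  simpa [mul_assoc, Ring.inverse_mul_cancel y (hL.2 y ⟨_, hy⟩ hy0)] using K.mul_mem hq hyK

theorem psi_bijective_general
    {G : Type u} [CommGroup G] {L : Type v} [CommRing L]
    (𝒜 : GradedStr G L) (hL : 𝒜.IsGradedField)
    (l K k : Subring L)
    (hl : 𝒜.IsGradedSubfield l) (hK : 𝒜.IsGradedSubfield K)
    (hkl : k ≤ l) (hkK : k ≤ K)
    (halg : ∀ x ∈ l, 𝒜.IsHomog x → IntegralOver k x)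
    (hone : ∀ x : L, x ∈ 𝒜.deg 1 → x ∈ K)
    (htor : ∀ g : G, (∃ x : L, x ≠ 0 ∧ x ∈ 𝒜.deg g) →
      ∃ m : ℕ, 0 < m ∧ ∃ y ∈ K, y ≠ 0 ∧ y ∈ 𝒜.deg (g ^ m)) :
    (∀ O : Subring L, IsGVRofSubfield 𝒜 ⊤ O → l ≤ O →
      (IsGVRofSubfield 𝒜 K (O ⊓ K) ∧ k ≤ O ⊓ K)) ∧
    (∀ O' : Subring L, IsGVRofSubfield 𝒜 K O' → k ≤ O' →
      ∃! O : Subring L, (IsGVRofSubfield 𝒜 ⊤ O ∧ l ≤ O) ∧ O ⊓ K = O') := by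
  refine ⟨fun O hO hlO => ⟨hO.inf_of_le hK le_top, le_inf (hkl.trans hlO) hkK⟩,
    fun O' hO' hkO' => ?_⟩
  have hpow := 𝒜.exists_pow_mem_of_torsion hL hone htor
  exact ⟨hO'.extend hL hone,
    ⟨⟨hO'.isGVRofSubfield_extend hL hone hpow, hO'.le_extend hL hone hpow hkO' hl.1 halg⟩,
      hO'.extend_inf hL hone hK.1⟩,
    fun O ⟨⟨hO, _⟩, hOK⟩ => hO'.eq_extend hL hone hpow hO hOK⟩

/-- Let `L` be a `G`-graded field with graded subfields `l` and `K`,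
and `k` a graded subfield with `k ⊆ l ∩ K`.  If `l/k` is algebraic (every homogeneous
element of `l` is integral over `k`), the grading-one parts agree (`L₁ = K₁`), and
`ρ(L^×)/ρ(K^×)` is a torsion group, then the restriction map
`ψ : P_{L/l} → P_{K/k}`, `O ↦ O ∩ K`, is bijective. -/
theorem psi_bijective
    {G : Type u} [CommGroup G] {L : Type v} [CommRing L]
    (𝒜 : GradedStr G L) (hL : 𝒜.IsGradedField)
    (l K k : Subring L)
    (hl : 𝒜.IsGradedSubfield l) (hK : 𝒜.IsGradedSubfield K)
    (hk : 𝒜.IsGradedSubfield k) (hkl : k ≤ l) (hkK : k ≤ K)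
    (halg : ∀ x ∈ l, 𝒜.IsHomog x → IntegralOver k x)
    (hone : ∀ x : L, x ∈ 𝒜.deg 1 → x ∈ K)
    (htor : ∀ g : G, (∃ x : L, x ≠ 0 ∧ x ∈ 𝒜.deg g) →
      ∃ m : ℕ, 0 < m ∧ ∃ y ∈ K, y ≠ 0 ∧ y ∈ 𝒜.deg (g ^ m)) :
    (∀ O : Subring L, IsGVRofSubfield 𝒜 ⊤ O → l ≤ O →
      (IsGVRofSubfield 𝒜 K (O ⊓ K) ∧ k ≤ O ⊓ K)) ∧
    (∀ O' : Subring L, IsGVRofSubfield 𝒜 K O' → k ≤ O' →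
      ∃! O : Subring L, (IsGVRofSubfield 𝒜 ⊤ O ∧ l ≤ O) ∧ O ⊓ K = O') :=
  psi_bijective_general 𝒜 hL l K k hl hK hkl hkK halg hone htor
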